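/- arXiv:2211.02233 — 6 statements merged into one kernel-verified Lean document; each statement's English description precedes it below -/
import Mathlib

section
/- Unbiasedness of the shifted doubly robust error estimator: under the stated setup, the expectation of the estimator equals the restricted true error, i.e. E[((1[h(X)≠Y] − 1[h(X)≠Y'])·Q/P(X) + 1[h(X)≠Y'])·1[X∈D]] = E[1[X∈D]·1[h(X)≠Y]]. -/
open MeasureTheory

open Classical in
/-- Real-valued indicator of a proposition. -/
noncomputable def ind (p : Prop) : ℝ := if p then 1 else 0

lemma ind_nonneg (p : Prop) : 0 ≤ ind p := by
  unfold ind; split <;> norm_num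

lemma ind_le_one (p : Prop) : ind p ≤ 1 := by
  unfold ind; split <;> norm_num

lemma abs_ind_le_one (p : Prop) : |ind p| ≤ 1 := by
  rw [abs_of_nonneg (ind_nonneg p)]; exact ind_le_one p

lemma measurable_ind_mem {Ω α : Type*} [MeasurableSpace Ω] [MeasurableSpace α]
    {s : Set α} (hs : MeasurableSet s) {f : Ω → α} (hf : Measurable f) :
    Measurable fun ω => ind (f ω ∈ s) := by
  unfold ind
  exact Measurable.ite (hf hs) measurable_const measurable_const

lemma integrable_of_bound {Ω : Type*} [MeasurableSpace Ω] {μ : Measure Ω}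
    [IsFiniteMeasure μ] {f : Ω → ℝ} (hf : Measurable f) (C : ℝ)
    (hC : ∀ ω, |f ω| ≤ C) : Integrable f μ := by
  apply (integrable_const C).mono' hf.aestronglyMeasurable
  filter_upwards with ω
  simpa [Real.norm_eq_abs] using hC ω

/-- Unbiasedness of the shifted doubly robust error estimator. -/
theorem shifted_dr_error_unbiased
    {Ω 𝒳 : Type*} [MeasurableSpace Ω] [MeasurableSpace 𝒳]
    (μ : Measure Ω) [IsProbabilityMeasure μ]
    (X : Ω → 𝒳) (hX : Measurable X)
    (Y Y' : Ω → Bool) (hY : Measurable Y) (hY' : Measurable Y')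
    (D : Set 𝒳) (hD : MeasurableSet D)
    (P : 𝒳 → ℝ) (hP : Measurable P)
    (pmin : ℝ) (hpmin : 0 < pmin)
    (hPbound : ∀ x, pmin ≤ P x ∧ P x ≤ 1)
    (Q : Ω → ℝ) (hQ : Measurable Q) (hQ01 : ∀ ω, Q ω = 0 ∨ Q ω = 1)
    (hQcond : ∀ g : 𝒳 × Bool × Bool → ℝ, Measurable g → (∃ C, ∀ z, |g z| ≤ C) →
      ∫ ω, g (X ω, Y ω, Y' ω) * Q ω ∂μ = ∫ ω, g (X ω, Y ω, Y' ω) * P (X ω) ∂μ)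
    (h : 𝒳 → Bool) (hh : Measurable h) :
    ∫ ω, ((ind (h (X ω) ≠ Y ω) - ind (h (X ω) ≠ Y' ω)) * Q ω / P (X ω)
        + ind (h (X ω) ≠ Y' ω)) * ind (X ω ∈ D) ∂μ
      = ∫ ω, ind (X ω ∈ D) * ind (h (X ω) ≠ Y ω) ∂μ := by
  have hPpos : ∀ x, 0 < P x := fun x => lt_of_lt_of_le hpmin (hPbound x).1
  have hPne : ∀ x, P x ≠ 0 := fun x => (hPpos x).ne'
  -- the test function
  set g : 𝒳 × Bool × Bool → ℝ := fun z =>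
    (ind (h z.1 ≠ z.2.1) - ind (h z.1 ≠ z.2.2)) * ind (z.1 ∈ D) / P z.1 with hgdef
  -- measurability of g
  have hne : MeasurableSet {p : Bool × Bool | p.1 ≠ p.2} :=
    (Set.toFinite _).measurableSet
  have hmg : Measurable g := by
    apply Measurable.div _ (hP.comp measurable_fst)
    apply Measurable.mul _ (measurable_ind_mem hD measurable_fst)
    apply Measurable.sub
    · exact measurable_ind_mem hne
        (((hh.comp measurable_fst)).prodMk (measurable_fst.comp measurable_snd))
    · exact measurable_ind_mem hne
        (((hh.comp measurable_fst)).prodMk (measurable_snd.comp measurable_snd))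
  -- bound on g
  have hbg : ∀ z, |g z| ≤ 2 / pmin := by
    intro z
    rw [hgdef]
    simp only
    rw [abs_div, abs_mul]
    have h1 : |ind (h z.1 ≠ z.2.1) - ind (h z.1 ≠ z.2.2)| ≤ 2 := by
      calc |ind (h z.1 ≠ z.2.1) - ind (h z.1 ≠ z.2.2)|
          ≤ |ind (h z.1 ≠ z.2.1)| + |ind (h z.1 ≠ z.2.2)| := abs_sub _ _
        _ ≤ 1 + 1 := add_le_add (abs_ind_le_one _) (abs_ind_le_one _)
        _ = 2 := by norm_num
    have h2 : |ind (h z.1 ≠ z.2.1) - ind (h z.1 ≠ z.2.2)| * |ind (z.1 ∈ D)| ≤ 2 := by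
      calc _ ≤ 2 * 1 := mul_le_mul h1 (abs_ind_le_one _) (abs_nonneg _) (by norm_num)
        _ = 2 := by ring
    have h3 : pmin ≤ |P z.1| := by
      rw [abs_of_pos (hPpos z.1)]; exact (hPbound z.1).1
    exact div_le_div₀ (by norm_num) h2 hpmin h3
  -- shorthand
  set a : Ω → ℝ := fun ω => ind (h (X ω) ≠ Y ω) with hadef
  set b : Ω → ℝ := fun ω => ind (h (X ω) ≠ Y' ω) with hbdef
  set d : Ω → ℝ := fun ω => ind (X ω ∈ D) with hddef
  have hma : Measurable a := by
    have := measurable_ind_mem hne ((hh.comp hX).prodMk hY)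
    exact this
  have hmb : Measurable b := by
    have := measurable_ind_mem hne ((hh.comp hX).prodMk hY')
    exact this
  have hmd : Measurable d := measurable_ind_mem hD hX
  have habs_a : ∀ ω, |a ω| ≤ 1 := fun ω => abs_ind_le_one _
  have habs_b : ∀ ω, |b ω| ≤ 1 := fun ω => abs_ind_le_one _
  have habs_d : ∀ ω, |d ω| ≤ 1 := fun ω => abs_ind_le_one _
  have habs_Q : ∀ ω, |Q ω| ≤ 1 := by
    intro ω; rcases hQ01 ω with hq | hq <;> simp [hq]
  -- integrabilities
  have hint_gQ : Integrable (fun ω => g (X ω, Y ω, Y' ω) * Q ω) μ := by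
    apply integrable_of_bound ((hmg.comp ((hX.prodMk (hY.prodMk hY')))).mul hQ) (2 / pmin)
    intro ω
    show |g (X ω, Y ω, Y' ω) * Q ω| ≤ 2 / pmin
    rw [abs_mul]
    calc |g (X ω, Y ω, Y' ω)| * |Q ω| ≤ (2 / pmin) * 1 :=
          mul_le_mul (hbg _) (habs_Q ω) (abs_nonneg _) (by positivity)
      _ = 2 / pmin := by ring
  have hint_bd : Integrable (fun ω => b ω * d ω) μ := by
    apply integrable_of_bound (hmb.mul hmd) 1
    intro ω
    show |b ω * d ω| ≤ 1
    rw [abs_mul]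
    calc |b ω| * |d ω| ≤ 1 * 1 :=
          mul_le_mul (habs_b ω) (habs_d ω) (abs_nonneg _) (by norm_num)
      _ = 1 := by ring
  have hint_ad : Integrable (fun ω => a ω * d ω) μ := by
    apply integrable_of_bound (hma.mul hmd) 1
    intro ω
    show |a ω * d ω| ≤ 1
    rw [abs_mul]
    calc |a ω| * |d ω| ≤ 1 * 1 :=
          mul_le_mul (habs_a ω) (habs_d ω) (abs_nonneg _) (by norm_num)
      _ = 1 := by ring
  -- key identity from hQcond
  have hkey : ∫ ω, g (X ω, Y ω, Y' ω) * Q ω ∂μ = ∫ ω, g (X ω, Y ω, Y' ω) * P (X ω) ∂μ :=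
    hQcond g hmg ⟨2 / pmin, hbg⟩
  have hrhs : (fun ω => g (X ω, Y ω, Y' ω) * P (X ω)) = fun ω => a ω * d ω - b ω * d ω := by
    funext ω
    rw [hgdef]
    simp only [hadef, hbdef, hddef]
    rw [div_mul_cancel₀ _ (hPne (X ω))]
    ring
  -- rewrite the LHS integrand
  have hlhs : (fun ω => ((ind (h (X ω) ≠ Y ω) - ind (h (X ω) ≠ Y' ω)) * Q ω / P (X ω)
        + ind (h (X ω) ≠ Y' ω)) * ind (X ω ∈ D))
      = fun ω => g (X ω, Y ω, Y' ω) * Q ω + b ω * d ω := by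
    funext ω
    rw [hgdef]
    simp only [hadef, hbdef, hddef]
    field_simp
  rw [hlhs, integral_add hint_gQ hint_bd, hkey, hrhs,
    integral_sub hint_ad hint_bd]
  have : (fun ω => ind (X ω ∈ D) * ind (h (X ω) ≠ Y ω)) = fun ω => a ω * d ω := by
    funext ω; simp only [hadef, hddef]; ring
  rw [this]
  ring
end

section
/- Second-moment (variance-type) bound for the shifted doubly robust regret estimator: under the stated setup, E[R̃(h,h')²] ≤ E[((4/P(X))·1[Y≠Y'] + 1)·1[h(X)≠h'(X)]·1[X∈D] + 1[h(X)≠h'(X)]·1[X∉D]]. In particular the second moment of the pair-regret estimator is controlled by the weighted probability that the weak label is wrong on the region where h and h' disagree, rather than by the full inverse query probability. -/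
open MeasureTheory

/-- The instantaneous shifted doubly robust regret estimator. -/
noncomputable def Rtilde {Ω 𝒳 : Type*} (X : Ω → 𝒳) (Y Y' : Ω → Bool) (D : Set 𝒳)
    (P : 𝒳 → ℝ) (Q : Ω → ℝ) (h h' h₀ : 𝒳 → Bool) (ω : Ω) : ℝ :=
  ind (X ω ∈ D) *
      (((ind (h (X ω) ≠ Y ω) - ind (h (X ω) ≠ Y' ω)) * Q ω / P (X ω)
          + ind (h (X ω) ≠ Y' ω))
        - ((ind (h' (X ω) ≠ Y ω) - ind (h' (X ω) ≠ Y' ω)) * Q ω / P (X ω)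
          + ind (h' (X ω) ≠ Y' ω)))
    + ind (X ω ∉ D) * (ind (h (X ω) ≠ h₀ (X ω)) - ind (h' (X ω) ≠ h₀ (X ω)))

lemma ind_true {p : Prop} (hp : p) : ind p = 1 := by simp [ind, hp]
lemma ind_false {p : Prop} (hp : ¬ p) : ind p = 0 := by simp [ind, hp]

lemma measurable_ind {α} [MeasurableSpace α] {p : α → Prop}
    (hp : MeasurableSet {a | p a}) : Measurable (fun a => ind (p a)) := by
  have : (fun a => ind (p a)) = Set.indicator {a | p a} (fun _ => (1:ℝ)) := by
    funext a
    by_cases h : p a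
    · simp [ind, h, Set.indicator_of_mem, Set.mem_setOf_eq]
    · simp [ind, h]
  rw [this]
  exact (measurable_const).indicator hp

lemma measurable_ind_ne {α} [MeasurableSpace α] {f g : α → Bool}
    (hf : Measurable f) (hg : Measurable g) :
    Measurable (fun a => ind (f a ≠ g a)) := by
  apply measurable_ind
  have : {a | f a ≠ g a} = (fun a => (f a, g a)) ⁻¹' {p : Bool × Bool | p.1 ≠ p.2} := rfl
  rw [this]
  exact (hf.prodMk hg) ((Set.toFinite _).measurableSet)

lemma integrable_of_bdd {Ω : Type*} [MeasurableSpace Ω] {μ : Measure Ω}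
    [IsFiniteMeasure μ] {f : Ω → ℝ} (hf : Measurable f) {C : ℝ}
    (hC : ∀ ω, |f ω| ≤ C) : Integrable f μ :=
  (integrable_const C).mono' hf.aestronglyMeasurable
    (Filter.Eventually.of_forall (fun ω => by simpa using hC ω))

/-- `t` term. -/
noncomputable def ttF {𝒳 : Type*} (h h' : 𝒳 → Bool) (z : 𝒳 × Bool × Bool) : ℝ :=
  (ind (h z.1 ≠ z.2.1) - ind (h z.1 ≠ z.2.2))
    - (ind (h' z.1 ≠ z.2.1) - ind (h' z.1 ≠ z.2.2))

/-- `c` term. -/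
noncomputable def ccF {𝒳 : Type*} (h h' : 𝒳 → Bool) (z : 𝒳 × Bool × Bool) : ℝ :=
  ind (h z.1 ≠ z.2.2) - ind (h' z.1 ≠ z.2.2)

noncomputable def g1F {𝒳 : Type*} (D : Set 𝒳) (P : 𝒳 → ℝ) (h h' : 𝒳 → Bool)
    (z : 𝒳 × Bool × Bool) : ℝ :=
  ind (z.1 ∈ D) * (ttF h h' z ^ 2 / P z.1 ^ 2 + 2 * ttF h h' z * ccF h h' z / P z.1)

noncomputable def g2F {𝒳 : Type*} (D : Set 𝒳) (h h' h₀ : 𝒳 → Bool)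
    (z : 𝒳 × Bool × Bool) : ℝ :=
  ind (z.1 ∈ D) * ccF h h' z ^ 2
    + ind (z.1 ∉ D) * (ind (h z.1 ≠ h₀ z.1) - ind (h' z.1 ≠ h₀ z.1)) ^ 2

lemma key1 (a b y y' : Bool) :
    ((ind (a ≠ y) - ind (a ≠ y')) - (ind (b ≠ y) - ind (b ≠ y'))) ^ 2
      = 4 * ind (y ≠ y') * ind (a ≠ b) := by
  cases a <;> cases b <;> cases y <;> cases y' <;> norm_num [ind]

lemma key2 (a b y y' : Bool) :
    2 * ((ind (a ≠ y) - ind (a ≠ y')) - (ind (b ≠ y) - ind (b ≠ y')))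
        * (ind (a ≠ y') - ind (b ≠ y'))
      + (ind (a ≠ y') - ind (b ≠ y')) ^ 2 ≤ ind (a ≠ b) := by
  cases a <;> cases b <;> cases y <;> cases y' <;> norm_num [ind]

lemma key3 (a b c : Bool) : (ind (a ≠ c) - ind (b ≠ c)) ^ 2 ≤ ind (a ≠ b) := by
  cases a <;> cases b <;> cases c <;> norm_num [ind]

lemma tt_abs (a b y y' : Bool) :
    |(ind (a ≠ y) - ind (a ≠ y')) - (ind (b ≠ y) - ind (b ≠ y'))| ≤ 2 := by
  cases a <;> cases b <;> cases y <;> cases y' <;> norm_num [ind]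

lemma cc_abs (a b y' : Bool) : |ind (a ≠ y') - ind (b ≠ y')| ≤ 1 := by
  cases a <;> cases b <;> cases y' <;> norm_num [ind]

/-- Second-moment (variance-type) bound for the shifted doubly robust regret
estimator. -/
theorem shifted_dr_regret_second_moment
    {Ω 𝒳 : Type*} [MeasurableSpace Ω] [MeasurableSpace 𝒳]
    (μ : Measure Ω) [IsProbabilityMeasure μ]
    (X : Ω → 𝒳) (hX : Measurable X)
    (Y Y' : Ω → Bool) (hY : Measurable Y) (hY' : Measurable Y')
    (D : Set 𝒳) (hD : MeasurableSet D)
    (P : 𝒳 → ℝ) (hP : Measurable P)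
    (pmin : ℝ) (hpmin : 0 < pmin)
    (hPbound : ∀ x, pmin ≤ P x ∧ P x ≤ 1)
    (Q : Ω → ℝ) (hQ : Measurable Q) (hQ01 : ∀ ω, Q ω = 0 ∨ Q ω = 1)
    (hQcond : ∀ g : 𝒳 × Bool × Bool → ℝ, Measurable g → (∃ C, ∀ z, |g z| ≤ C) →
      ∫ ω, g (X ω, Y ω, Y' ω) * Q ω ∂μ = ∫ ω, g (X ω, Y ω, Y' ω) * P (X ω) ∂μ)
    (h h' h₀ : 𝒳 → Bool) (hh : Measurable h) (hh' : Measurable h')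
    (hh₀ : Measurable h₀) :
    ∫ ω, (Rtilde X Y Y' D P Q h h' h₀ ω) ^ 2 ∂μ
      ≤ ∫ ω, ((4 / P (X ω)) * ind (Y ω ≠ Y' ω) + 1)
              * ind (h (X ω) ≠ h' (X ω)) * ind (X ω ∈ D)
            + ind (h (X ω) ≠ h' (X ω)) * ind (X ω ∉ D) ∂μ := by
  classical
  have hppos : ∀ x, 0 < P x := fun x => lt_of_lt_of_le hpmin (hPbound x).1
  -- measurability of the pieces
  have htt_m : Measurable (ttF h h' : 𝒳 × Bool × Bool → ℝ) := by
    unfold ttF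
    exact ((measurable_ind_ne (hh.comp measurable_fst)
        (measurable_fst.comp measurable_snd)).sub
      (measurable_ind_ne (hh.comp measurable_fst)
        (measurable_snd.comp measurable_snd))).sub
      ((measurable_ind_ne (hh'.comp measurable_fst)
        (measurable_fst.comp measurable_snd)).sub
      (measurable_ind_ne (hh'.comp measurable_fst)
        (measurable_snd.comp measurable_snd)))
  have hcc_m : Measurable (ccF h h' : 𝒳 × Bool × Bool → ℝ) := by
    unfold ccF
    exact (measurable_ind_ne (hh.comp measurable_fst)
        (measurable_snd.comp measurable_snd)).sub
      (measurable_ind_ne (hh'.comp measurable_fst)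
        (measurable_snd.comp measurable_snd))
  have hindD_m : Measurable (fun z : 𝒳 × Bool × Bool => ind (z.1 ∈ D)) :=
    measurable_ind (measurable_fst hD)
  have hindDc_m : Measurable (fun z : 𝒳 × Bool × Bool => ind (z.1 ∉ D)) :=
    measurable_ind ((measurable_fst hD).compl)
  have hPz : Measurable (fun z : 𝒳 × Bool × Bool => P z.1) := hP.comp measurable_fst
  have hg1_m : Measurable (g1F D P h h' : 𝒳 × Bool × Bool → ℝ) := by
    unfold g1F
    exact hindD_m.mul (((htt_m.pow_const 2).div (hPz.pow_const 2)).add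
      (((measurable_const.mul htt_m).mul hcc_m).div hPz))
  have hg2_m : Measurable (g2F D h h' h₀ : 𝒳 × Bool × Bool → ℝ) := by
    unfold g2F
    exact (hindD_m.mul (hcc_m.pow_const 2)).add (hindDc_m.mul
      (((measurable_ind_ne (hh.comp measurable_fst) (hh₀.comp measurable_fst)).sub
        (measurable_ind_ne (hh'.comp measurable_fst) (hh₀.comp measurable_fst))).pow_const 2))
  -- bounds on g1, g2
  have hg1_bdd : ∀ z, |g1F D P h h' z| ≤ 4 / pmin ^ 2 + 4 / pmin := by
    intro z
    have hpz := hPbound z.1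
    have hpz0 := hppos z.1
    have ht : |ttF h h' z| ≤ 2 := tt_abs _ _ _ _
    have hc : |ccF h h' z| ≤ 1 := cc_abs _ _ _
    have h1 : |g1F D P h h' z|
        ≤ |ttF h h' z ^ 2 / P z.1 ^ 2 + 2 * ttF h h' z * ccF h h' z / P z.1| := by
      unfold g1F
      rw [abs_mul]
      have : |ind (z.1 ∈ D)| ≤ 1 := by
        rw [abs_of_nonneg (ind_nonneg _)]; exact ind_le_one _
      exact mul_le_of_le_one_left (abs_nonneg _) this
    refine h1.trans ((abs_add_le _ _).trans ?_)
    have ht2 : ttF h h' z ^ 2 ≤ 4 := by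
      nlinarith [sq_abs (ttF h h' z), abs_nonneg (ttF h h' z)]
    have h2 : |ttF h h' z ^ 2 / P z.1 ^ 2| ≤ 4 / pmin ^ 2 := by
      rw [abs_of_nonneg (by positivity : (0:ℝ) ≤ ttF h h' z ^ 2 / P z.1 ^ 2)]
      exact div_le_div₀ (by norm_num) ht2 (by positivity)
        (pow_le_pow_left₀ hpmin.le hpz.1 2)
    have h3 : |2 * ttF h h' z * ccF h h' z / P z.1| ≤ 4 / pmin := by
      rw [abs_div, abs_of_nonneg (le_of_lt hpz0)]
      apply div_le_div₀ (by norm_num) ?_ hpmin (hpz.1)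
      rw [abs_mul, abs_mul, abs_two]
      nlinarith [abs_nonneg (ttF h h' z), abs_nonneg (ccF h h' z)]
    linarith
  have hg2_nonneg : ∀ z, 0 ≤ g2F D h h' h₀ z := by
    intro z; unfold g2F
    exact add_nonneg (mul_nonneg (ind_nonneg _) (sq_nonneg _))
      (mul_nonneg (ind_nonneg _) (sq_nonneg _))
  have hg2_bdd : ∀ z, |g2F D h h' h₀ z| ≤ 2 := by
    intro z
    rw [abs_of_nonneg (hg2_nonneg z)]
    unfold g2F
    have hc : ccF h h' z ^ 2 ≤ 1 := by
      have h1 : |ccF h h' z| ≤ 1 := by unfold ccF; exact cc_abs _ _ _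
      nlinarith [sq_abs (ccF h h' z), abs_nonneg (ccF h h' z)]
    have hd2 : (ind (h z.1 ≠ h₀ z.1) - ind (h' z.1 ≠ h₀ z.1)) ^ 2 ≤ 1 :=
      (key3 _ _ _).trans (ind_le_one _)
    have u1 : ind (z.1 ∈ D) * ccF h h' z ^ 2 ≤ 1 :=
      mul_le_one₀ (ind_le_one _) (sq_nonneg _) hc
    have u2 : ind (z.1 ∉ D) * (ind (h z.1 ≠ h₀ z.1) - ind (h' z.1 ≠ h₀ z.1)) ^ 2 ≤ 1 :=
      mul_le_one₀ (ind_le_one _) (sq_nonneg _) hd2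
    linarith
  -- pointwise identity
  have hkey : ∀ ω, (Rtilde X Y Y' D P Q h h' h₀ ω) ^ 2
      = g1F D P h h' (X ω, Y ω, Y' ω) * Q ω + g2F D h h' h₀ (X ω, Y ω, Y' ω) := by
    intro ω
    have hpne : P (X ω) ≠ 0 := (hppos (X ω)).ne'
    rcases hQ01 ω with hq | hq <;> by_cases hd : X ω ∈ D
    · simp only [Rtilde, g1F, g2F, ttF, ccF, hq, ind_true hd,
        ind_false (not_not_intro hd)]
      field_simp
      ring
    · simp only [Rtilde, g1F, g2F, ttF, ccF, hq, ind_false hd,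
        ind_true (show X ω ∉ D from hd)]
      field_simp
      ring
    · simp only [Rtilde, g1F, g2F, ttF, ccF, hq, ind_true hd,
        ind_false (not_not_intro hd)]
      field_simp
      ring
    · simp only [Rtilde, g1F, g2F, ttF, ccF, hq, ind_false hd,
        ind_true (show X ω ∉ D from hd)]
      field_simp
      ring
  -- pointwise inequality
  have hptw : ∀ ω, g1F D P h h' (X ω, Y ω, Y' ω) * P (X ω)
        + g2F D h h' h₀ (X ω, Y ω, Y' ω)
      ≤ ((4 / P (X ω)) * ind (Y ω ≠ Y' ω) + 1)
          * ind (h (X ω) ≠ h' (X ω)) * ind (X ω ∈ D)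
        + ind (h (X ω) ≠ h' (X ω)) * ind (X ω ∉ D) := by
    intro ω
    have hpne : P (X ω) ≠ 0 := (hppos (X ω)).ne'
    by_cases hd : X ω ∈ D
    · simp only [g1F, g2F, ttF, ccF, ind_true hd, ind_false (not_not_intro hd)]
      have e : (1 * (ttF h h' (X ω, Y ω, Y' ω) ^ 2 / P (X ω) ^ 2
              + 2 * ttF h h' (X ω, Y ω, Y' ω) * ccF h h' (X ω, Y ω, Y' ω) / P (X ω)))
            * P (X ω)
            + (1 * ccF h h' (X ω, Y ω, Y' ω) ^ 2
              + 0 * (ind (h (X ω) ≠ h₀ (X ω)) - ind (h' (X ω) ≠ h₀ (X ω))) ^ 2)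
          = ttF h h' (X ω, Y ω, Y' ω) ^ 2 / P (X ω)
            + (2 * ttF h h' (X ω, Y ω, Y' ω) * ccF h h' (X ω, Y ω, Y' ω)
              + ccF h h' (X ω, Y ω, Y' ω) ^ 2) := by
        field_simp; ring
      simp only [ttF, ccF] at e
      rw [e, key1 (h (X ω)) (h' (X ω)) (Y ω) (Y' ω)]
      have k2 := key2 (h (X ω)) (h' (X ω)) (Y ω) (Y' ω)
      refine le_trans (add_le_add le_rfl k2) (le_of_eq ?_)
      ring
    · simp only [g1F, g2F, ttF, ccF, ind_false hd, ind_true (show X ω ∉ D from hd)]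
      have k3 := key3 (h (X ω)) (h' (X ω)) (h₀ (X ω))
      have e : (0 * (ttF h h' (X ω, Y ω, Y' ω) ^ 2 / P (X ω) ^ 2
              + 2 * ttF h h' (X ω, Y ω, Y' ω) * ccF h h' (X ω, Y ω, Y' ω) / P (X ω)))
            * P (X ω)
            + (0 * ccF h h' (X ω, Y ω, Y' ω) ^ 2
              + 1 * (ind (h (X ω) ≠ h₀ (X ω)) - ind (h' (X ω) ≠ h₀ (X ω))) ^ 2)
          = (ind (h (X ω) ≠ h₀ (X ω)) - ind (h' (X ω) ≠ h₀ (X ω))) ^ 2 := by ring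
      simp only [ttF, ccF] at e
      rw [e]
      refine k3.trans (le_of_eq ?_)
      ring
  -- integrability
  have hZ : Measurable (fun ω => (X ω, Y ω, Y' ω)) := hX.prodMk (hY.prodMk hY')
  have hQabs : ∀ ω, |Q ω| ≤ 1 := by
    intro ω; rcases hQ01 ω with hq | hq <;> simp [hq]
  have hint1 : Integrable (fun ω => g1F D P h h' (X ω, Y ω, Y' ω) * Q ω) μ := by
    apply integrable_of_bdd ((hg1_m.comp hZ).mul hQ)
      (C := (4 / pmin ^ 2 + 4 / pmin) * 1)
    intro ω
    show |g1F D P h h' (X ω, Y ω, Y' ω) * Q ω| ≤ (4 / pmin ^ 2 + 4 / pmin) * 1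
    rw [abs_mul]
    refine mul_le_mul (hg1_bdd _) (hQabs ω) (abs_nonneg _) ?_
    have : (0:ℝ) ≤ 4 / pmin ^ 2 := by positivity
    have : (0:ℝ) ≤ 4 / pmin := by positivity
    linarith
  have hint2 : Integrable (fun ω => g2F D h h' h₀ (X ω, Y ω, Y' ω)) μ :=
    integrable_of_bdd (hg2_m.comp hZ) (fun ω => hg2_bdd _)
  have hint3 : Integrable (fun ω => g1F D P h h' (X ω, Y ω, Y' ω) * P (X ω)) μ := by
    apply integrable_of_bdd ((hg1_m.comp hZ).mul (hP.comp hX))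
      (C := (4 / pmin ^ 2 + 4 / pmin) * 1)
    intro ω
    show |g1F D P h h' (X ω, Y ω, Y' ω) * P (X ω)| ≤ (4 / pmin ^ 2 + 4 / pmin) * 1
    rw [abs_mul]
    refine mul_le_mul (hg1_bdd _) ?_ (abs_nonneg _) ?_
    · rw [abs_of_nonneg (hppos (X ω)).le]
      exact (hPbound (X ω)).2
    · have : (0:ℝ) < pmin ^ 2 := by positivity
      have : (0:ℝ) ≤ 4 / pmin ^ 2 := by positivity
      have : (0:ℝ) ≤ 4 / pmin := by positivity
      linarith
  have hint4 : Integrable (fun ω => ((4 / P (X ω)) * ind (Y ω ≠ Y' ω) + 1)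
        * ind (h (X ω) ≠ h' (X ω)) * ind (X ω ∈ D)
      + ind (h (X ω) ≠ h' (X ω)) * ind (X ω ∉ D)) μ := by
    have hm : Measurable (fun ω => ((4 / P (X ω)) * ind (Y ω ≠ Y' ω) + 1)
          * ind (h (X ω) ≠ h' (X ω)) * ind (X ω ∈ D)
        + ind (h (X ω) ≠ h' (X ω)) * ind (X ω ∉ D)) := by
      refine Measurable.add (Measurable.mul (Measurable.mul ?_ ?_) ?_)
        (Measurable.mul ?_ ?_)
      · exact ((measurable_const.div (hP.comp hX)).mul
          (measurable_ind_ne hY hY')).add measurable_const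
      · exact measurable_ind_ne (hh.comp hX) (hh'.comp hX)
      · exact measurable_ind (hX hD)
      · exact measurable_ind_ne (hh.comp hX) (hh'.comp hX)
      · exact measurable_ind ((hX hD).compl)
    apply integrable_of_bdd hm (C := (4 / pmin + 1) + 1)
    intro ω
    have hb0 : (0:ℝ) ≤ 4 / P (X ω) := div_nonneg (by norm_num) (hppos (X ω)).le
    have hb : 4 / P (X ω) ≤ 4 / pmin :=
      div_le_div₀ (by norm_num) le_rfl hpmin (hPbound (X ω)).1
    have i1 := ind_nonneg (Y ω ≠ Y' ω); have i1' := ind_le_one (Y ω ≠ Y' ω)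
    have i2 := ind_nonneg (h (X ω) ≠ h' (X ω)); have i2' := ind_le_one (h (X ω) ≠ h' (X ω))
    have i3 := ind_nonneg (X ω ∈ D); have i3' := ind_le_one (X ω ∈ D)
    have i4 := ind_nonneg (X ω ∉ D); have i4' := ind_le_one (X ω ∉ D)
    have t0 : (0:ℝ) ≤ 4 / P (X ω) * ind (Y ω ≠ Y' ω) + 1 :=
      add_nonneg (mul_nonneg hb0 i1) zero_le_one
    have e1 : 4 / P (X ω) * ind (Y ω ≠ Y' ω) + 1 ≤ 4 / pmin + 1 := by
      have : 4 / P (X ω) * ind (Y ω ≠ Y' ω) ≤ 4 / P (X ω) :=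
        mul_le_of_le_one_right hb0 i1'
      linarith
    have e2 : (4 / P (X ω) * ind (Y ω ≠ Y' ω) + 1) * ind (h (X ω) ≠ h' (X ω))
          * ind (X ω ∈ D) ≤ 4 / P (X ω) * ind (Y ω ≠ Y' ω) + 1 :=
      le_trans (mul_le_of_le_one_right (mul_nonneg t0 i2) i3')
        (mul_le_of_le_one_right t0 i2')
    have e3 : ind (h (X ω) ≠ h' (X ω)) * ind (X ω ∉ D) ≤ 1 :=
      mul_le_one₀ i2' i4 i4'
    have e4 : (0:ℝ) ≤ (4 / P (X ω) * ind (Y ω ≠ Y' ω) + 1) * ind (h (X ω) ≠ h' (X ω))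
          * ind (X ω ∈ D) :=
      mul_nonneg (mul_nonneg t0 i2) i3
    have e5 : (0:ℝ) ≤ ind (h (X ω) ≠ h' (X ω)) * ind (X ω ∉ D) := mul_nonneg i2 i4
    have hb4 : (0:ℝ) ≤ 4 / pmin := le_trans hb0 hb
    rw [abs_le]
    constructor
    · linarith
    · linarith
  -- main chain
  calc ∫ ω, (Rtilde X Y Y' D P Q h h' h₀ ω) ^ 2 ∂μ
      = ∫ ω, (g1F D P h h' (X ω, Y ω, Y' ω) * Q ω
          + g2F D h h' h₀ (X ω, Y ω, Y' ω)) ∂μ := by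
        exact integral_congr_ae (Filter.Eventually.of_forall hkey)
    _ = (∫ ω, g1F D P h h' (X ω, Y ω, Y' ω) * Q ω ∂μ)
        + ∫ ω, g2F D h h' h₀ (X ω, Y ω, Y' ω) ∂μ := integral_add hint1 hint2
    _ = (∫ ω, g1F D P h h' (X ω, Y ω, Y' ω) * P (X ω) ∂μ)
        + ∫ ω, g2F D h h' h₀ (X ω, Y ω, Y' ω) ∂μ := by
        rw [hQcond (g1F D P h h') hg1_m ⟨4 / pmin ^ 2 + 4 / pmin, hg1_bdd⟩]
    _ = ∫ ω, (g1F D P h h' (X ω, Y ω, Y' ω) * P (X ω)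
        + g2F D h h' h₀ (X ω, Y ω, Y' ω)) ∂μ := (integral_add hint3 hint2).symm
    _ ≤ ∫ ω, ((4 / P (X ω)) * ind (Y ω ≠ Y' ω) + 1)
              * ind (h (X ω) ≠ h' (X ω)) * ind (X ω ∈ D)
            + ind (h (X ω) ≠ h' (X ω)) * ind (X ω ∉ D) ∂μ :=
        integral_mono (hint3.add hint2) hint4 hptw
end

section
/- Second-moment bound for the shifted doubly robust error estimator: under the stated setup, with E_h := ((1[h(X)≠Y] − 1[h(X)≠Y'])·Q/P(X) + 1[h(X)≠Y'])·1[X∈D], one has E[E_h²] ≤ E[1[X∈D]·(1[Y≠Y']/P(X) + 1[h(X)≠Y])]; i.e. the second moment is controlled by the inverse-probability-weighted weak-label error rate on the disagreement region plus the restricted true error of h. -/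
/-!
Because `Q` and the indicators are idempotent, `E²` is affine in the query indicator:
`E² = G(X, Y, Y') · Q + 1[X ∈ D] · 1[h(X) ≠ Y']²` for a weight `G` that is bounded since `P ≥ pmin`.
The query condition therefore lets us replace `Q` by `P(X)`, after which, with `a = 1[h(X) ≠ Y]`
and `b = 1[h(X) ≠ Y']`, the integrand becomes `1[X ∈ D] · ((a - b)²/P(X) + a² - (a - b)²)`.
Finally `(a - b)² = 1[Y ≠ Y']` and `a² - (a - b)² ≤ a² ≤ a`.
-/

open MeasureTheory

lemma abs_ind_sub_ind_le_one (p q : Prop) : |ind p - ind q| ≤ 1 :=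
  abs_sub_le_iff.2
    ⟨by linarith [ind_le_one p, ind_nonneg q], by linarith [ind_le_one q, ind_nonneg p]⟩

lemma abs_ind_div_add_ind_le {pmin x : ℝ} (hpmin : 0 < pmin) (hx : pmin ≤ x) (p q : Prop) :
    |ind p / x + ind q| ≤ pmin⁻¹ + 1 := by
  refine (abs_add_le _ _).trans (add_le_add ?_ (abs_ind_le_one q))
  rw [abs_div, abs_of_pos (hpmin.trans_le hx), ← one_div]
  exact div_le_div₀ zero_le_one (abs_ind_le_one p) hpmin hx

lemma ind_sq (p : Prop) : ind p ^ 2 = ind p := by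
  unfold ind; split <;> norm_num

lemma ind_ne_sub_ind_ne_sq (c y y' : Bool) : (ind (c ≠ y) - ind (c ≠ y')) ^ 2 = ind (y ≠ y') := by
  cases c <;> cases y <;> cases y' <;> norm_num [ind]

@[fun_prop]
lemma measurable_ind_s4 : Measurable ind := measurable_from_top

/-- With `d = 1[x ∈ D]`, `u = a - b` and `r = 1/P(x)`, this is the coefficient of the query
indicator in the square of the shifted doubly robust estimator. -/
def shiftedWeight (d u b r : ℝ) : ℝ := d * (u ^ 2 * r ^ 2 + 2 * u * b * r)

lemma sq_shifted_eq_shiftedWeight_mul_add {d q : ℝ} (hd : d ^ 2 = d) (hq : q ^ 2 = q) (u b p : ℝ) :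
    ((u * q / p + b) * d) ^ 2 = shiftedWeight d u b p⁻¹ * q + d * b ^ 2 := by
  unfold shiftedWeight
  linear_combination (u ^ 2 * q ^ 2 * p⁻¹ ^ 2 + 2 * u * b * q * p⁻¹ + b ^ 2) * hd
    + d * u ^ 2 * p⁻¹ ^ 2 * hq

lemma shiftedWeight_mul_add_le {d a p : ℝ} (hd : 0 ≤ d) (ha₀ : 0 ≤ a) (ha₁ : a ≤ 1) (hp : 0 < p)
    (b : ℝ) :
    shiftedWeight d (a - b) b p⁻¹ * p + d * b ^ 2 ≤ d * ((a - b) ^ 2 / p + a) := by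
  calc shiftedWeight d (a - b) b p⁻¹ * p + d * b ^ 2
      = d * ((a - b) ^ 2 / p + (a ^ 2 - (a - b) ^ 2)) := by
        unfold shiftedWeight; field_simp; ring
    _ ≤ d * ((a - b) ^ 2 / p + a) := by gcongr; nlinarith [sq_nonneg (a - b)]

lemma abs_shiftedWeight_le {d u b r R : ℝ} (hd : |d| ≤ 1) (hu : |u| ≤ 1) (hb : |b| ≤ 1)
    (hr : 0 ≤ r) (hR : r ≤ R) :
    |shiftedWeight d u b r| ≤ R ^ 2 + 2 * R := by
  calc |shiftedWeight d u b r|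
      ≤ |d| * (|u| ^ 2 * r ^ 2 + 2 * |u| * |b| * r) := by
        rw [shiftedWeight, abs_mul]; gcongr
        refine (abs_add_le _ _).trans_eq ?_
        simp only [abs_mul, abs_pow, abs_two, abs_of_nonneg hr]
    _ ≤ 1 * (1 ^ 2 * R ^ 2 + 2 * 1 * 1 * R) := by gcongr
    _ = R ^ 2 + 2 * R := by ring

lemma integrable_mul_of_abs_le {α : Type*} [MeasurableSpace α] {μ : Measure α} [IsFiniteMeasure μ]
    {f g : α → ℝ} (hf : Measurable f) (hg : Measurable g) {C C' : ℝ} (hfC : ∀ a, |f a| ≤ C)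
    (hgC' : ∀ a, |g a| ≤ C') : Integrable (fun a => f a * g a) μ :=
  .of_bound (by fun_prop) (C * C') <| ae_of_all _ fun a => by
    rw [Real.norm_eq_abs, abs_mul]
    exact mul_le_mul (hfC a) (hgC' a) (abs_nonneg _) ((abs_nonneg _).trans (hfC a))

section QueryWeight

variable {𝒳 : Type*} (D : Set 𝒳) (P : 𝒳 → ℝ) (h : 𝒳 → Bool)

noncomputable def queryWeight (z : 𝒳 × Bool × Bool) : ℝ :=
  shiftedWeight (ind (z.1 ∈ D)) (ind (h z.1 ≠ z.2.1) - ind (h z.1 ≠ z.2.2))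
    (ind (h z.1 ≠ z.2.2)) (P z.1)⁻¹

lemma measurable_queryWeight [MeasurableSpace 𝒳] (hD : MeasurableSet D) (hP : Measurable P)
    (hh : Measurable h) : Measurable (queryWeight D P h) := by
  unfold queryWeight shiftedWeight
  fun_prop (disch := assumption)

lemma abs_queryWeight_le {pmin : ℝ} (hpmin : 0 < pmin) (hP : ∀ x, pmin ≤ P x)
    (z : 𝒳 × Bool × Bool) : |queryWeight D P h z| ≤ pmin⁻¹ ^ 2 + 2 * pmin⁻¹ :=
  abs_shiftedWeight_le (abs_ind_le_one _) (abs_ind_sub_ind_le_one _ _) (abs_ind_le_one _)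
    (inv_nonneg.2 (hpmin.trans_le (hP z.1)).le) (inv_anti₀ hpmin (hP z.1))

end QueryWeight

/-- Second-moment bound for the shifted doubly robust error estimator. -/
theorem shifted_dr_error_second_moment
    {Ω 𝒳 : Type*} [MeasurableSpace Ω] [MeasurableSpace 𝒳]
    (μ : Measure Ω) [IsProbabilityMeasure μ]
    (X : Ω → 𝒳) (hX : Measurable X)
    (Y Y' : Ω → Bool) (hY : Measurable Y) (hY' : Measurable Y')
    (D : Set 𝒳) (hD : MeasurableSet D)
    (P : 𝒳 → ℝ) (hP : Measurable P)
    (pmin : ℝ) (hpmin : 0 < pmin)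
    (hPbound : ∀ x, pmin ≤ P x ∧ P x ≤ 1)
    (Q : Ω → ℝ) (hQ : Measurable Q) (hQ01 : ∀ ω, Q ω = 0 ∨ Q ω = 1)
    (hQcond : ∀ g : 𝒳 × Bool × Bool → ℝ, Measurable g → (∃ C, ∀ z, |g z| ≤ C) →
      ∫ ω, g (X ω, Y ω, Y' ω) * Q ω ∂μ = ∫ ω, g (X ω, Y ω, Y' ω) * P (X ω) ∂μ)
    (h : 𝒳 → Bool) (hh : Measurable h)
    (E : Ω → ℝ)
    (hE : ∀ ω, E ω = ((ind (h (X ω) ≠ Y ω) - ind (h (X ω) ≠ Y' ω)) * Q ω / P (X ω)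
        + ind (h (X ω) ≠ Y' ω)) * ind (X ω ∈ D)) :
    ∫ ω, (E ω) ^ 2 ∂μ
      ≤ ∫ ω, ind (X ω ∈ D) *
          (ind (Y ω ≠ Y' ω) / P (X ω) + ind (h (X ω) ≠ Y ω)) ∂μ := by
  have hPpos : ∀ x, 0 < P x := fun x => hpmin.trans_le (hPbound x).1
  set G := queryWeight D P h
  have hG : Measurable G := measurable_queryWeight D P h hD hP hh
  have hG_bdd : ∀ z, |G z| ≤ pmin⁻¹ ^ 2 + 2 * pmin⁻¹ :=
    abs_queryWeight_le D P h hpmin fun x => (hPbound x).1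
  set H : Ω → ℝ := fun ω => ind (X ω ∈ D) * ind (h (X ω) ≠ Y' ω) ^ 2
  have hE_sq : ∀ ω, E ω ^ 2 = G (X ω, Y ω, Y' ω) * Q ω + H ω := fun ω => by
    rw [hE]
    exact sq_shifted_eq_shiftedWeight_mul_add (ind_sq _)
      (by rcases hQ01 ω with hq | hq <;> simp [hq]) _ _ _
  have hGP_le : ∀ ω, G (X ω, Y ω, Y' ω) * P (X ω) + H ω
      ≤ ind (X ω ∈ D) * (ind (Y ω ≠ Y' ω) / P (X ω) + ind (h (X ω) ≠ Y ω)) := fun ω => by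
    rw [← ind_ne_sub_ind_ne_sq (h (X ω))]
    exact shiftedWeight_mul_add_le (ind_nonneg _) (ind_nonneg _) (ind_le_one _) (hPpos _) _
  have hQ_le : ∀ ω, |Q ω| ≤ 1 := fun ω => by rcases hQ01 ω with hq | hq <;> simp [hq]
  have hP_le : ∀ ω, |P (X ω)| ≤ 1 := fun ω => by
    rw [abs_of_pos (hPpos _)]; exact (hPbound _).2
  have hGQ : Integrable (fun ω => G (X ω, Y ω, Y' ω) * Q ω) μ :=
    integrable_mul_of_abs_le (by fun_prop) hQ (fun _ => hG_bdd _) hQ_le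
  have hGP : Integrable (fun ω => G (X ω, Y ω, Y' ω) * P (X ω)) μ :=
    integrable_mul_of_abs_le (by fun_prop) (by fun_prop) (fun _ => hG_bdd _) hP_le
  have hH : Integrable H μ :=
    integrable_mul_of_abs_le (by fun_prop (disch := assumption)) (by fun_prop)
      (fun _ => abs_ind_le_one _) fun ω => by rw [ind_sq]; exact abs_ind_le_one _
  have hRHS : Integrable (fun ω => ind (X ω ∈ D) *
      (ind (Y ω ≠ Y' ω) / P (X ω) + ind (h (X ω) ≠ Y ω))) μ :=
    integrable_mul_of_abs_le (by fun_prop (disch := assumption)) (by fun_prop)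
      (fun _ => abs_ind_le_one _) fun _ => abs_ind_div_add_ind_le hpmin (hPbound _).1 _ _
  calc ∫ ω, E ω ^ 2 ∂μ
      = (∫ ω, G (X ω, Y ω, Y' ω) * Q ω ∂μ) + ∫ ω, H ω ∂μ := by
        simp_rw [hE_sq]; exact integral_add hGQ hH
    _ = ∫ ω, (G (X ω, Y ω, Y' ω) * P (X ω) + H ω) ∂μ := by
        rw [hQcond G hG ⟨_, hG_bdd⟩, integral_add hGP hH]
    _ ≤ _ := integral_mono (hGP.add hH) hRHS hGP_le
end

section
/- Guarantee of the pessimistically estimated conditional weak-label error: suppose ∫_D e dμ ≤ 2·Ŵ + 2^{-k} and Ŵ ≤ 2·∫_D e dμ + 2^{-k}. Then for every x ∈ D, e(x) ≤ min{ κ·(2·Ŵ + 2^{-k})/μ(D), 1 }, and moreover min{ κ·(2·Ŵ + 2^{-k})/μ(D), 1 } ≤ min{ κ·(4·sup_{x'∈D} e(x') + 3·2^{-k}/μ(D)), 1 }. That is, the pessimistic estimate κ·(2Ŵ + 2^{-k})/μ(D) is a valid upper bound on the conditional weak-label error on D and is at most a constant multiple of the true maximal conditional error plus a 2^{-k} resolution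 term. -/
open MeasureTheory

/-- Guarantee of the pessimistically estimated conditional weak-label error. -/
theorem pessimistic_conditional_wl_error_guarantee
    {𝒳 : Type*} [MeasurableSpace 𝒳]
    (μ : Measure 𝒳) [IsProbabilityMeasure μ]
    (D : Set 𝒳) (hD : MeasurableSet D) (hDpos : 0 < μ D)
    (e : 𝒳 → ℝ) (he : Measurable e)
    (hbound : ∀ x, 0 ≤ e x ∧ e x ≤ 1)
    (κ : ℝ) (hκ : 1 ≤ κ)
    (hratio : ∀ x ∈ D, ∀ x' ∈ D, e x ≤ κ * e x')
    (What : ℝ) (hWhat : 0 ≤ What) (k : ℕ)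
    (hup : ∫ x in D, e x ∂μ ≤ 2 * What + (2 : ℝ) ^ (-(k : ℤ)))
    (hlow : What ≤ 2 * (∫ x in D, e x ∂μ) + (2 : ℝ) ^ (-(k : ℤ))) :
    (∀ x ∈ D,
        e x ≤ min (κ * (2 * What + (2 : ℝ) ^ (-(k : ℤ))) / (μ D).toReal) 1)
      ∧ min (κ * (2 * What + (2 : ℝ) ^ (-(k : ℤ))) / (μ D).toReal) 1
          ≤ min (κ * (4 * sSup (e '' D)
              + 3 * (2 : ℝ) ^ (-(k : ℤ)) / (μ D).toReal)) 1 := by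
  set t : ℝ := (2 : ℝ) ^ (-(k : ℤ)) with ht
  have htpos : 0 < t := by positivity
  have hκpos : (0 : ℝ) < κ := by linarith
  have hm : 0 < (μ D).toReal := ENNReal.toReal_pos hDpos.ne' (measure_ne_top μ D)
  have hInt : IntegrableOn e D μ := by
    refine (integrable_const (1 : ℝ)).mono' he.aestronglyMeasurable ?_
    filter_upwards with x
    rw [Real.norm_eq_abs, abs_le]
    exact ⟨by linarith [(hbound x).1], (hbound x).2⟩
  obtain ⟨x₀, hx₀⟩ : D.Nonempty := by
    rcases Set.eq_empty_or_nonempty D with h | h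
    · simp [h] at hDpos
    · exact h
  set S : ℝ := sSup (e '' D) with hS
  have hBdd : BddAbove (e '' D) := ⟨1, by rintro _ ⟨x, _, rfl⟩; exact (hbound x).2⟩
  have hS_le : ∀ x ∈ D, e x ≤ S := fun x hx => le_csSup hBdd ⟨x, hx, rfl⟩
  have hS0 : 0 ≤ S := le_trans (hbound x₀).1 (hS_le x₀ hx₀)
  have hI_le : ∫ x in D, e x ∂μ ≤ S * (μ D).toReal := by
    have := setIntegral_mono_on hInt (integrable_const S) hD (fun x hx => hS_le x hx)
    rwa [setIntegral_const, smul_eq_mul, mul_comm] at this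
  have hI_ge : ∀ x ∈ D, e x / κ * (μ D).toReal ≤ ∫ x in D, e x ∂μ := by
    intro x hx
    have := setIntegral_mono_on (integrable_const (e x / κ)) hInt hD
      (fun x' hx' => by
        rw [div_le_iff₀ hκpos, mul_comm]
        exact hratio x hx x' hx')
    rwa [setIntegral_const, smul_eq_mul, mul_comm] at this
  constructor
  · intro x hx
    refine le_min ?_ (hbound x).2
    rw [le_div_iff₀ hm]
    have h1 := hI_ge x hx
    have h2 : e x / κ * (μ D).toReal ≤ 2 * What + t := le_trans h1 hup
    have h3 : e x / κ * κ = e x := div_mul_cancel₀ _ hκpos.ne'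
    nlinarith [mul_le_mul_of_nonneg_left h2 hκpos.le]
  · refine min_le_min ?_ le_rfl
    rw [div_le_iff₀ hm]
    have hrhs : κ * (4 * S + 3 * t / (μ D).toReal) * (μ D).toReal
        = κ * (4 * (S * (μ D).toReal)) + κ * (3 * t) := by
      field_simp
    rw [hrhs]
    nlinarith [hI_le, hlow, hup, mul_le_mul_of_nonneg_left hI_le hκpos.le,
      mul_le_mul_of_nonneg_left hlow hκpos.le]
end

section
/- Epoch-sum bound for empirical errors (auxiliary lemma): let m ≥ 1 and let τ₀, τ₁, …, τ_{m+1} and e₁, …, e_{m+1} be real numbers with τ₀ = 0, τ₁ ≥ 3, τ_{i−1} ≤ τ_i ≤ 2·τ_{i−1} for all 2 ≤ i ≤ m+1, e_i ≥ 0 for all i, e₁ ≤ e₂, and τ_{i−1}·e_i ≤ τ_i·e_{i+1} for all 2 ≤ i ≤ m. Then ∑_{i=1}^{m} (τ_i − τ_{i−1})·e_i ≤ 4·τ_m·(log τ_{m+1})·e_{m+1}, where log denotes the natural logarithm. -/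
/-!
Put `M = τ_m e_{m+1}`. The chain condition makes `i ↦ τ_{i-1} e_i` nondecreasing, so
`τ_{i-1} e_i ≤ M` for every epoch, and also `τ_1 e_1 ≤ τ_1 e_2 ≤ M`. Since an epoch at most
doubles `τ`, the inequality `1 - 1/x ≤ log x` gives
`τ_i - τ_{i-1} ≤ 2 τ_{i-1} (log τ_i - log τ_{i-1})`, so the `i`-th summand is at most
`2 M (log τ_i - log τ_{i-1})`. These telescope, and the first summand `τ_1 e_1 ≤ M` is absorbed
into `2 M log τ_1` because `log τ_1 ≥ log 3 > 1/2`. Altogether the sum is at most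
`2 M log τ_m ≤ 4 M log τ_{m+1}`.
-/

open Finset Real

theorem monotoneOn_nat_Icc_of_le_succ {α : Type*} [Preorder α] {f : ℕ → α} {a b : ℕ}
    (hf : ∀ n, a ≤ n → n < b → f n ≤ f (n + 1)) : MonotoneOn f (Set.Icc a b) := by
  intro i hi j hj hij
  -- Freeze `f` beyond `b` to apply the unbounded version.
  have hclip : ∀ n, a ≤ n → f (min n b) ≤ f (min (n + 1) b) := by
    intro n hn
    rcases lt_or_ge n b with hnb | hbn
    · rw [min_eq_left hnb.le, min_eq_left hnb]
      exact hf n hn hnb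
    · rw [min_eq_right hbn, min_eq_right (hbn.trans n.le_succ)]
  have := Nat.rel_of_forall_rel_succ_of_le_of_le (· ≤ ·) hclip hi.1 hij
  simpa only [min_eq_left hi.2, min_eq_left hj.2] using this

theorem Finset.sum_Ioc_le_sub_of_le {M : Type*} [AddCommGroup M] [PartialOrder M]
    [IsOrderedAddMonoid M] {f g : ℕ → M} {a b : ℕ} (hab : a ≤ b)
    (h : ∀ i ∈ Ioc a b, g i ≤ f i - f (i - 1)) : ∑ i ∈ Ioc a b, g i ≤ f b - f a := by
  induction b, hab using Nat.le_induction with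
  | base => simp
  | succ b hab ih =>
    rw [sum_Ioc_succ_top hab]
    have hlast := h (b + 1) (mem_Ioc.2 ⟨by omega, le_rfl⟩)
    have hinit := ih fun i hi ↦ h i (Ioc_subset_Ioc_right b.le_succ hi)
    rw [Nat.add_sub_cancel] at hlast
    calc ∑ i ∈ Ioc a b, g i + g (b + 1) ≤ (f b - f a) + (f (b + 1) - f b) :=
          add_le_add hinit hlast
      _ = f (b + 1) - f a := by abel

theorem Real.sub_le_two_mul_mul_log_sub_log {a b : ℝ} (ha : 0 < a) (hab : a ≤ b)
    (hb : b ≤ 2 * a) : b - a ≤ 2 * a * (log b - log a) := by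
  have hb0 : 0 < b := ha.trans_le hab
  have hlog : (b - a) / b ≤ log b - log a := by
    have := one_sub_inv_le_log_of_pos (div_pos hb0 ha)
    rwa [inv_div, log_div hb0.ne' ha.ne', one_sub_div hb0.ne'] at this
  calc b - a = b * ((b - a) / b) := by field_simp
    _ ≤ 2 * a * ((b - a) / b) :=
        mul_le_mul_of_nonneg_right hb (div_nonneg (sub_nonneg.2 hab) hb0.le)
    _ ≤ 2 * a * (log b - log a) := mul_le_mul_of_nonneg_left hlog (by positivity)

theorem Real.sub_mul_le_two_mul_mul_log_sub_log {a b x M : ℝ} (ha : 0 < a) (hab : a ≤ b)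
    (hb : b ≤ 2 * a) (hx : 0 ≤ x) (haxM : a * x ≤ M) :
    (b - a) * x ≤ 2 * M * (log b - log a) := by
  have hlog : 0 ≤ log b - log a := sub_nonneg.2 (log_le_log ha hab)
  calc (b - a) * x ≤ 2 * a * (log b - log a) * x :=
        mul_le_mul_of_nonneg_right (sub_le_two_mul_mul_log_sub_log ha hab hb) hx
    _ = 2 * (log b - log a) * (a * x) := by ring
    _ ≤ 2 * (log b - log a) * M := mul_le_mul_of_nonneg_left haxM (by positivity)
    _ = 2 * M * (log b - log a) := by ring

theorem Real.one_half_lt_log_of_two_le {x : ℝ} (hx : 2 ≤ x) : 1 / 2 < log x :=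
  calc (1 / 2 : ℝ) < log 2 := by linarith [log_two_gt_d9]
    _ ≤ log x := log_le_log two_pos hx

theorem sum_Icc_sub_mul_le_two_mul_log {m : ℕ} {τ e : ℕ → ℝ} {M : ℝ} (hm : 1 ≤ m)
    (hτ0 : τ 0 = 0) (hτ1 : 2 ≤ τ 1) (hτ_pos : ∀ i ∈ Icc 1 m, 0 < τ i)
    (hτ_step : ∀ i ∈ Ioc 1 m, τ (i - 1) ≤ τ i ∧ τ i ≤ 2 * τ (i - 1)) (he : ∀ i, 0 ≤ e i)
    (he1 : τ 1 * e 1 ≤ M) (hweight : ∀ i ∈ Ioc 1 m, τ (i - 1) * e i ≤ M) :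
    ∑ i ∈ Icc 1 m, (τ i - τ (i - 1)) * e i ≤ 2 * M * log (τ m) := by
  have hfirst : (τ 1 - τ 0) * e 1 ≤ 2 * M * log (τ 1) := by
    have hM_nonneg : 0 ≤ M := (mul_nonneg (by linarith) (he 1)).trans he1
    have := one_half_lt_log_of_two_le hτ1
    rw [hτ0, sub_zero]
    nlinarith
  have hrest : ∑ i ∈ Ioc 1 m, (τ i - τ (i - 1)) * e i
      ≤ 2 * M * log (τ m) - 2 * M * log (τ 1) := by
    refine sum_Ioc_le_sub_of_le (f := fun i ↦ 2 * M * log (τ i)) hm fun i hi ↦ ?_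
    have hi' := mem_Ioc.1 hi
    rw [← mul_sub]
    exact sub_mul_le_two_mul_mul_log_sub_log (hτ_pos (i - 1) (mem_Icc.2 ⟨by omega, by omega⟩))
      (hτ_step i hi).1 (hτ_step i hi).2 (he i) (hweight i hi)
  rw [Icc_eq_cons_Ioc hm, sum_cons]
  linarith

theorem epoch_sum_error_bound_general
    (m : ℕ)
    (τ : ℕ → ℝ) (e : ℕ → ℝ)
    (hτ0 : τ 0 = 0)
    (hτ1 : 3 ≤ τ 1)
    (hτmono : ∀ i, 2 ≤ i → i ≤ m + 1 → τ (i - 1) ≤ τ i ∧ τ i ≤ 2 * τ (i - 1))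
    (he : ∀ i, 0 ≤ e i)
    (he12 : e 1 ≤ e 2)
    (hchain : ∀ i, 2 ≤ i → i ≤ m → τ (i - 1) * e i ≤ τ i * e (i + 1)) :
    ∑ i ∈ Finset.Icc 1 m, (τ i - τ (i - 1)) * e i
      ≤ 4 * τ m * Real.log (τ (m + 1)) * e (m + 1) := by
  rcases Nat.eq_zero_or_pos m with rfl | hm
  · simp [hτ0]
  set M := τ m * e (m + 1)
  have hτ_mono : MonotoneOn τ (Set.Icc 1 (m + 1)) :=
    monotoneOn_nat_Icc_of_le_succ fun n hn hnm ↦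
      by simpa using (hτmono (n + 1) (by omega) (by omega)).1
  have hτ_ge : ∀ i ∈ Icc 1 (m + 1), 3 ≤ τ i := fun i hi ↦
    hτ1.trans (hτ_mono ⟨le_rfl, by omega⟩ (by simpa using hi) (mem_Icc.1 hi).1)
  have hweight : ∀ i ∈ Icc 2 (m + 1), τ (i - 1) * e i ≤ M := fun i hi ↦ by
    refine monotoneOn_nat_Icc_of_le_succ (f := fun i ↦ τ (i - 1) * e i) (a := 2) (b := m + 1)
      (fun n hn hnm ↦ ?_) (by simpa using hi) ⟨by omega, le_rfl⟩ (mem_Icc.1 hi).2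
    simpa using hchain n hn (by omega)
  have he1 : τ 1 * e 1 ≤ M := (mul_le_mul_of_nonneg_left he12 (by linarith)).trans
    (hweight 2 (mem_Icc.2 ⟨le_rfl, by omega⟩))
  have hsum := sum_Icc_sub_mul_le_two_mul_log hm hτ0 (by linarith)
    (fun i hi ↦ by linarith [hτ_ge i (Icc_subset_Icc_right m.le_succ hi)])
    (fun i hi ↦ hτmono i (mem_Ioc.1 hi).1 ((mem_Ioc.1 hi).2.trans m.le_succ)) he he1
    (fun i hi ↦ hweight i (mem_Icc.2 ⟨(mem_Ioc.1 hi).1, (mem_Ioc.1 hi).2.trans m.le_succ⟩))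
  have hτm_ge : 3 ≤ τ m := hτ_ge m (mem_Icc.2 ⟨hm, by omega⟩)
  have hτm_pos : 0 < τ m := by linarith
  have hlog_m : 0 ≤ log (τ m) := log_nonneg (by linarith)
  have hlog_succ : log (τ m) ≤ log (τ (m + 1)) :=
    log_le_log hτm_pos (by simpa using (hτmono (m + 1) (by omega) le_rfl).1)
  have hM_nonneg : 0 ≤ M := mul_nonneg hτm_pos.le (he _)
  calc ∑ i ∈ Icc 1 m, (τ i - τ (i - 1)) * e i ≤ 2 * M * log (τ m) := hsum
    _ ≤ 4 * M * log (τ (m + 1)) := by nlinarith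
    _ = 4 * τ m * log (τ (m + 1)) * e (m + 1) := by ring

/-- Epoch-sum bound for empirical errors (auxiliary lemma):
`∑_{i=1}^m (τ_i − τ_{i−1})·e_i ≤ 4·τ_m·(log τ_{m+1})·e_{m+1}`. -/
theorem epoch_sum_error_bound
    (m : ℕ) (hm : 1 ≤ m)
    (τ : ℕ → ℝ) (e : ℕ → ℝ)
    (hτ0 : τ 0 = 0)
    (hτ1 : 3 ≤ τ 1)
    (hτmono : ∀ i, 2 ≤ i → i ≤ m + 1 → τ (i - 1) ≤ τ i ∧ τ i ≤ 2 * τ (i - 1))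
    (he : ∀ i, 0 ≤ e i)
    (he12 : e 1 ≤ e 2)
    (hchain : ∀ i, 2 ≤ i → i ≤ m → τ (i - 1) * e i ≤ τ i * e (i + 1)) :
    ∑ i ∈ Finset.Icc 1 m, (τ i - τ (i - 1)) * e i
      ≤ 4 * τ m * Real.log (τ (m + 1)) * e (m + 1) :=
  epoch_sum_error_bound_general m τ e hτ0 hτ1 hτmono he he12 hchain
end

section
/- Confidence-radius recursion bound (key step of the main generalization theorem, giving Δ_m ≤ 4·Δ_m*): let Δ, ε, ō, L, c₁, c₂, C be nonnegative real numbers with c₁²·C ≤ c₂·L and Δ ≤ c₁·√(ε·(C·Δ + 3·ō)) + c₂·ε·L. Then Δ ≤ 4·(c₁·√(ε·ō) + c₂·ε·L). -/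
/-!
Split `√(ε (C Δ + 3 ō)) ≤ √(ε C Δ) + 2 √(ε ō)`. By AM–GM and `c₁² C ≤ c₂ L`, the term
`c₁ √(ε C Δ) ≤ √(c₂ ε L · Δ)` is at most `(c₂ ε L + Δ) / 2`, so half of `Δ` is absorbed into
the left-hand side, leaving `Δ ≤ 4 c₁ √(ε ō) + 3 c₂ ε L`.
-/

namespace Real

lemma sqrt_add_le_sqrt_add_sqrt (x y : ℝ) : √(x + y) ≤ √x + √y := by
  refine sqrt_le_iff.mpr ⟨by positivity, ?_⟩
  have hcross : 0 ≤ √x * √y := by positivity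
  rw [add_sq, sq_sqrt', sq_sqrt']
  nlinarith [le_max_left x 0, le_max_left y 0]

lemma sqrt_mul_le_add_div_two {x y : ℝ} (h : 0 ≤ x + y) : √(x * y) ≤ (x + y) / 2 :=
  sqrt_le_iff.mpr ⟨by linarith, by nlinarith [sq_nonneg (x - y)]⟩

lemma mul_sqrt_mul_le_add_div_two {c a b x : ℝ} (hc : 0 ≤ c) (hb : 0 ≤ b) (hx : 0 ≤ x)
    (h : c ^ 2 * a ≤ b) : c * √(a * x) ≤ (b + x) / 2 :=
  calc c * √(a * x) = √(c ^ 2 * a * x) := by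
        rw [mul_assoc, sqrt_mul (sq_nonneg c), sqrt_sq hc]
    _ ≤ √(b * x) := sqrt_le_sqrt (mul_le_mul_of_nonneg_right h hx)
    _ ≤ (b + x) / 2 := sqrt_mul_le_add_div_two (by linarith)

lemma sqrt_three_mul_le (t : ℝ) : √(3 * t) ≤ 2 * √t := by
  rw [sqrt_mul (by norm_num)]
  gcongr
  exact sqrt_le_iff.mpr ⟨by norm_num, by norm_num⟩

end Real

theorem confidence_radius_recursion_bound_general
    (Δ ε obar L c₁ c₂ C : ℝ)
    (hΔ : 0 ≤ Δ) (hε : 0 ≤ ε) (hL : 0 ≤ L)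
    (hc₁ : 0 ≤ c₁) (hc₂ : 0 ≤ c₂)
    (hconst : c₁ ^ 2 * C ≤ c₂ * L)
    (hrec : Δ ≤ c₁ * Real.sqrt (ε * (C * Δ + 3 * obar)) + c₂ * ε * L) :
    Δ ≤ 4 * (c₁ * Real.sqrt (ε * obar) + c₂ * ε * L) := by
  have hsplit : √(ε * (C * Δ + 3 * obar)) ≤ √(ε * C * Δ) + 2 * √(ε * obar) :=
    calc √(ε * (C * Δ + 3 * obar)) = √(ε * C * Δ + 3 * (ε * obar)) := by ring_nf
      _ ≤ √(ε * C * Δ) + √(3 * (ε * obar)) := Real.sqrt_add_le_sqrt_add_sqrt _ _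
      _ ≤ √(ε * C * Δ) + 2 * √(ε * obar) := by gcongr; exact Real.sqrt_three_mul_le _
  have hbias : 0 ≤ c₂ * ε * L := by positivity
  have habsorb : c₁ * √(ε * C * Δ) ≤ (c₂ * ε * L + Δ) / 2 :=
    Real.mul_sqrt_mul_le_add_div_two hc₁ hbias hΔ
      (by linarith [mul_le_mul_of_nonneg_left hconst hε])
  linarith [mul_le_mul_of_nonneg_left hsplit hc₁]

/-- Confidence-radius recursion bound (key step of the main generalization
theorem, giving `Δ_m ≤ 4·Δ_m*`). -/
theorem confidence_radius_recursion_bound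
    (Δ ε obar L c₁ c₂ C : ℝ)
    (hΔ : 0 ≤ Δ) (hε : 0 ≤ ε) (hobar : 0 ≤ obar) (hL : 0 ≤ L)
    (hc₁ : 0 ≤ c₁) (hc₂ : 0 ≤ c₂) (hC : 0 ≤ C)
    (hconst : c₁ ^ 2 * C ≤ c₂ * L)
    (hrec : Δ ≤ c₁ * Real.sqrt (ε * (C * Δ + 3 * obar)) + c₂ * ε * L) :
    Δ ≤ 4 * (c₁ * Real.sqrt (ε * obar) + c₂ * ε * L) :=
  confidence_radius_recursion_bound_general Δ ε obar L c₁ c₂ C hΔ hε hL hc₁ hc₂ hconst hrec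
end
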